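/- For every n ≥ 2, (8/(n-1))∑_{k=1}^{n-2} kH_kH_{n-k-1} - 8∑_{k=1}^{n-2} H_k + (8/(n-1))∑_{k=1}^{n-1} k(H_k² - H_k^{(2)}) + (12/(n-1))∑_{k=1}^{n-1} kH_k - 8H_{n-1} = 8n(H_n² - H_n^{(2)}) - 14nH_{n-1} + 15n - 14. -/

import Mathlib

open Finset

noncomputable def H (n : ℕ) : ℝ := ∑ i ∈ Finset.range n, (1 : ℝ) / (i + 1)

noncomputable def H2 (n : ℕ) : ℝ := ∑ i ∈ Finset.range n, (1 : ℝ) / ((i + 1) ^ 2)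

lemma H_succ (n : ℕ) : H (n + 1) = H n + 1 / ((n : ℝ) + 1) := by
  simp [H, Finset.sum_range_succ]
lemma H2_succ (n : ℕ) : H2 (n + 1) = H2 n + 1 / ((n : ℝ) + 1) ^ 2 := by
  simp [H2, Finset.sum_range_succ]
lemma H_one : H 1 = 1 := by simp [H]

lemma Qlem (m : ℕ) : ∑ i ∈ range m, (1 : ℝ) / ((m : ℝ) + 1 - i) = H (m + 1) - 1 := by
  rw [← Finset.sum_range_reflect (fun i => (1 : ℝ) / ((m : ℝ) + 1 - i)) m]
  have h : ∀ i ∈ range m, (1 : ℝ) / ((m : ℝ) + 1 - ((m - 1 - i : ℕ) : ℝ))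
      = 1 / ((i : ℝ) + 2) := by
    intro i hi
    rw [mem_range] at hi
    have h1 : (m - 1 - i : ℕ) = m - (i + 1) := by omega
    have h2 : i + 1 ≤ m := hi
    rw [h1, Nat.cast_sub h2]
    push_cast
    congr 1
    ring
  rw [Finset.sum_congr rfl h]
  have h3 : H (m + 1) = (∑ i ∈ range m, (1 : ℝ) / ((i : ℝ) + 2)) + 1 := by
    rw [H, Finset.sum_range_succ']
    norm_num
    exact Finset.sum_congr rfl (fun x _ => by ring)
  rw [h3]
  ring

lemma Clem (m : ℕ) : ∑ i ∈ range m, (1 : ℝ) / (((i : ℝ) + 1) * ((m : ℝ) + 1 - i))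
    = (H m + H (m + 1) - 1) / ((m : ℝ) + 2) := by
  have key : ∀ i ∈ range m, (1 : ℝ) / (((i : ℝ) + 1) * ((m : ℝ) + 1 - i))
      = 1 / ((m : ℝ) + 2) * (1 / ((i : ℝ) + 1) + 1 / ((m : ℝ) + 1 - i)) := by
    intro i hi
    rw [mem_range] at hi
    have h1 : (0 : ℝ) < (m : ℝ) + 1 - i := by
      have : (i : ℝ) < m := by exact_mod_cast hi
      linarith
    have h2 : ((i : ℝ) + 1) ≠ 0 := by positivity
    have h3 : ((m : ℝ) + 2) ≠ 0 := by positivity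
    field_simp
    ring
  rw [Finset.sum_congr rfl key, ← Finset.mul_sum, Finset.sum_add_distrib, Qlem]
  have h4 : ∑ i ∈ range m, (1 : ℝ) / ((i : ℝ) + 1) = H m := by simp [H]
  rw [h4]
  ring

lemma Blem (m : ℕ) : ∑ i ∈ range m, H (m - i) / ((i : ℝ) + 1)
    = H (m + 1) ^ 2 - H2 (m + 1) := by
  induction m with
  | zero => simp [H, H2]
  | succ m ih =>
    rw [Finset.sum_range_succ]
    have hterm : H (m + 1 - m) = 1 := by
      have : m + 1 - m = 1 := by omega
      rw [this, H_one]
    have hcong : ∀ i ∈ range m, H (m + 1 - i) / ((i : ℝ) + 1)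
        = H (m - i) / ((i : ℝ) + 1) + 1 / (((i : ℝ) + 1) * ((m : ℝ) + 1 - i)) := by
      intro i hi
      rw [mem_range] at hi
      have h1 : m + 1 - i = (m - i) + 1 := by omega
      rw [h1, H_succ]
      have h2 : ((m - i : ℕ) : ℝ) = (m : ℝ) - i := Nat.cast_sub hi.le
      rw [h2]
      have h3 : (0 : ℝ) < (m : ℝ) + 1 - i := by
        have : (i : ℝ) < m := by exact_mod_cast hi
        linarith
      have h4 : ((i : ℝ) + 1) ≠ 0 := by positivity
      have h5 : ((m : ℝ) - i + 1) ≠ 0 := by linarith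
      field_simp
      ring
    rw [Finset.sum_congr rfl hcong, Finset.sum_add_distrib, ih, Clem, hterm]
    have hm : H m = H (m + 1) - 1 / ((m : ℝ) + 1) := by rw [H_succ]; ring
    rw [H_succ (m + 1), H2_succ (m + 1), hm]
    have h1 : ((m : ℝ) + 1) ≠ 0 := by positivity
    have h2 : ((m : ℝ) + 2) ≠ 0 := by positivity
    push_cast
    field_simp
    ring

lemma Alem (m : ℕ) : ∑ i ∈ range m, H (i + 1) / ((m : ℝ) - i)
    = H (m + 1) ^ 2 - H2 (m + 1) := by
  rw [← Blem m, ← Finset.sum_range_reflect (fun i => H (m - i) / ((i : ℝ) + 1)) m]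
  apply Finset.sum_congr rfl
  intro i hi
  rw [mem_range] at hi
  have h1 : m - (m - 1 - i) = i + 1 := by omega
  have h2 : (m - 1 - i : ℕ) = m - (i + 1) := by omega
  have h3 : i + 1 ≤ m := hi
  rw [h1, h2, Nat.cast_sub h3]
  push_cast
  congr 1
  ring

lemma P1 (m : ℕ) : ∑ i ∈ range m, H (i + 1) = (m + 1) * H m - m := by
  induction m with
  | zero => simp [H]
  | succ m ih =>
    have h1 : ((m : ℝ) + 1) ≠ 0 := by positivity
    rw [Finset.sum_range_succ, ih, H_succ]
    push_cast
    field_simp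
    ring

lemma P2 (m : ℕ) : ∑ i ∈ range m, ((i : ℝ) + 1) * H (i + 1)
    = m * (m + 1) / 2 * H m - m * (m - 1) / 4 := by
  induction m with
  | zero => simp [H]
  | succ m ih =>
    have h1 : ((m : ℝ) + 1) ≠ 0 := by positivity
    rw [Finset.sum_range_succ, ih, H_succ]
    push_cast
    field_simp
    ring

lemma P3 (m : ℕ) : ∑ i ∈ range m, ((i : ℝ) + 1) * (H (i + 1) ^ 2 - H2 (i + 1))
    = m * (m + 1) / 2 * (H m ^ 2 - H2 m) - m * (m - 1) / 2 * H m + m * (m - 1) / 4 := by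
  induction m with
  | zero => simp [H, H2]
  | succ m ih =>
    have h1 : ((m : ℝ) + 1) ≠ 0 := by positivity
    rw [Finset.sum_range_succ, ih, H_succ, H2_succ]
    push_cast
    field_simp
    ring

lemma Alem' (m : ℕ) : ∑ i ∈ range m, H (i + 1) / ((m : ℝ) + 1 - i)
    = H (m + 2) ^ 2 - H2 (m + 2) - H (m + 1) := by
  have h := Alem (m + 1)
  rw [Finset.sum_range_succ] at h
  have e1 : ((m + 1 : ℕ) : ℝ) - (m : ℕ) = 1 := by push_cast; ring
  rw [e1, div_one] at h
  have e2 : ∀ i ∈ range m, H (i + 1) / (((m + 1 : ℕ) : ℝ) - i)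
      = H (i + 1) / ((m : ℝ) + 1 - i) := by
    intro i _; push_cast; ring_nf
  rw [Finset.sum_congr rfl e2] at h
  linarith [h]

lemma Slem (m : ℕ) : ∑ i ∈ range m, ((i : ℝ) + 1) * H (i + 1) * H (m - i)
    = (m + 1) * (m + 2) / 2 * (H (m + 1) ^ 2 - H2 (m + 1))
      - (m + 1) ^ 2 * H (m + 1) + (m + 1) ^ 2 := by
  induction m with
  | zero => norm_num [H_one]; norm_num [H2, H]
  | succ m ih =>
    rw [Finset.sum_range_succ]
    have hterm : H (m + 1 - m) = 1 := by
      have : m + 1 - m = 1 := by omega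
      rw [this, H_one]
    have hcong : ∀ i ∈ range m, ((i : ℝ) + 1) * H (i + 1) * H (m + 1 - i)
        = ((i : ℝ) + 1) * H (i + 1) * H (m - i)
          + (((m : ℝ) + 2) * (H (i + 1) / ((m : ℝ) + 1 - i)) - H (i + 1)) := by
      intro i hi
      rw [mem_range] at hi
      have h1 : m + 1 - i = (m - i) + 1 := by omega
      rw [h1, H_succ (m - i)]
      have h2 : ((m - i : ℕ) : ℝ) = (m : ℝ) - i := Nat.cast_sub hi.le
      rw [h2]
      have h3 : (0 : ℝ) < (m : ℝ) + 1 - i := by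
        have : (i : ℝ) < m := by exact_mod_cast hi
        linarith
      have h5 : ((m : ℝ) - i + 1) ≠ 0 := by linarith
      field_simp
      ring
    rw [Finset.sum_congr rfl hcong, Finset.sum_add_distrib, ih, Finset.sum_sub_distrib,
      ← Finset.mul_sum, Alem', P1, hterm]
    have hm : H m = H (m + 1) - 1 / ((m : ℝ) + 1) := by rw [H_succ]; ring
    have e3 : (m : ℕ) + 1 + 1 = m + 2 := rfl
    rw [H_succ (m + 1), H2_succ (m + 1), hm]
    have h1 : ((m : ℝ) + 1) ≠ 0 := by positivity
    have h2 : ((m : ℝ) + 2) ≠ 0 := by positivity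
    push_cast
    field_simp
    ring

theorem big_sum_identity (n : ℕ) (hn : 2 ≤ n) :
    (8 / ((n : ℝ) - 1)) * ∑ k ∈ Finset.Icc 1 (n - 2), (k : ℝ) * H k * H (n - k - 1)
      - 8 * ∑ k ∈ Finset.Icc 1 (n - 2), H k
      + (8 / ((n : ℝ) - 1)) * ∑ k ∈ Finset.Icc 1 (n - 1), (k : ℝ) * (H k ^ 2 - H2 k)
      + (12 / ((n : ℝ) - 1)) * ∑ k ∈ Finset.Icc 1 (n - 1), (k : ℝ) * H k
      - 8 * H (n - 1)
      = 8 * n * (H n ^ 2 - H2 n) - 14 * n * H (n - 1) + 15 * n - 14 := by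
  obtain ⟨p, rfl⟩ : ∃ p, n = p + 2 := ⟨n - 2, by omega⟩
  have e2 : p + 2 - 2 = p := by omega
  have e1 : p + 2 - 1 = p + 1 := by omega
  rw [e2, e1]
  have s1 : ∑ k ∈ Finset.Icc 1 p, (k : ℝ) * H k * H (p + 2 - k - 1)
      = ∑ i ∈ range p, ((i : ℝ) + 1) * H (i + 1) * H (p - i) := by
    rw [← Finset.Ico_add_one_right_eq_Icc, Finset.sum_Ico_eq_sum_range]
    apply Finset.sum_congr rfl
    intro i hi
    have g1 : p + 2 - (1 + i) - 1 = p - i := by omega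
    have g2 : 1 + i = i + 1 := by omega
    rw [g1, g2]
    push_cast; ring
  have s2 : ∑ k ∈ Finset.Icc 1 p, H k = ∑ i ∈ range p, H (i + 1) := by
    rw [← Finset.Ico_add_one_right_eq_Icc, Finset.sum_Ico_eq_sum_range]
    exact Finset.sum_congr rfl (fun i _ => by rw [Nat.add_comm])
  have s3 : ∑ k ∈ Finset.Icc 1 (p + 1), (k : ℝ) * (H k ^ 2 - H2 k)
      = ∑ i ∈ range (p + 1), ((i : ℝ) + 1) * (H (i + 1) ^ 2 - H2 (i + 1)) := by
    rw [← Finset.Ico_add_one_right_eq_Icc, Finset.sum_Ico_eq_sum_range]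
    apply Finset.sum_congr rfl
    intro i hi
    have g2 : 1 + i = i + 1 := by omega
    rw [g2]
    push_cast; ring
  have s4 : ∑ k ∈ Finset.Icc 1 (p + 1), (k : ℝ) * H k
      = ∑ i ∈ range (p + 1), ((i : ℝ) + 1) * H (i + 1) := by
    rw [← Finset.Ico_add_one_right_eq_Icc, Finset.sum_Ico_eq_sum_range]
    apply Finset.sum_congr rfl
    intro i hi
    have g2 : 1 + i = i + 1 := by omega
    rw [g2]
    push_cast; ring
  rw [s1, s2, s3, s4, Slem, P1, P3 (p + 1), P2 (p + 1)]
  have hp : H p = H (p + 1) - 1 / ((p : ℝ) + 1) := by rw [H_succ]; ring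
  rw [show p + 2 = p + 1 + 1 by omega]
  rw [H_succ (p + 1), H2_succ (p + 1), hp]
  have h1 : ((p : ℝ) + 1) ≠ 0 := by positivity
  have h2 : ((p : ℝ) + 2) ≠ 0 := by positivity
  push_cast
  have h3 : ((p : ℝ) + 1 + 1 - 1) ≠ 0 := by rw [show (p:ℝ)+1+1-1 = (p:ℝ)+1 by ring]; exact h1
  field_simp
  ring
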